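/- arXiv:1008.0556 — 6 statements merged into one kernel-verified Lean document; each statement's English description precedes it below -/
import Mathlib

section
/- Let T : [0,1] → [0,1] be piecewise monotone with branches T_i : (a_{i-1}, a_i) → [0,1], i = 1,…,l, each C¹ with |T'| ≥ 1/α₀^k > 1, and suppose each inverse branch derivative (T_i^{-1})' is Lipschitz with Lip(𝓛 1) = B₁, where 𝓛 is the transfer operator of T. Then for every Lipschitz function f on [0,1], Lip(𝓛 f) ≤ α · Lip(f) + B₁ · |f|_∞, where α = M α₀^k and M is an upper bound for Σ_i 1/|T'(T_i^{-1} x)| over x. -/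
/-- Lasota–Yorke inequality for the transfer operator of a piecewise
monotone expanding Markov map.  The map `T` is encoded by its inverse branches
`g i` (each a contraction with factor `α₀^k`, since `|T'| ≥ 1/α₀^k`) and the
weights `w i x = 1/|T'(T_i⁻¹ x)|`, which are nonnegative, sum to at most `M`,
and whose total oscillation is controlled by `B₁ = Lip(𝓛 1)`.  The transfer
operator is `(𝓛 f)(x) = ∑ i, f (g i x) * w i x`, and the conclusion is
`Lip(𝓛 f) ≤ α Lip(f) + B₁ |f|_∞` with `α = M * α₀^k`. -/
theorem stmt_1 (l k : ℕ) (α₀ M B₁ L F : ℝ) (hα₀ : 0 < α₀) (hα₀1 : α₀ ^ k < 1)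
    (g : Fin l → ℝ → ℝ) (w : Fin l → ℝ → ℝ)
    (hgmap : ∀ i, ∀ x ∈ Set.Icc (0:ℝ) 1, g i x ∈ Set.Icc (0:ℝ) 1)
    (hg : ∀ i, ∀ x ∈ Set.Icc (0:ℝ) 1, ∀ y ∈ Set.Icc (0:ℝ) 1,
      |g i x - g i y| ≤ α₀ ^ k * |x - y|)
    (hw0 : ∀ i, ∀ x ∈ Set.Icc (0:ℝ) 1, 0 ≤ w i x)
    (hwM : ∀ x ∈ Set.Icc (0:ℝ) 1, (∑ i, w i x) ≤ M)
    (hwB : ∀ x ∈ Set.Icc (0:ℝ) 1, ∀ y ∈ Set.Icc (0:ℝ) 1,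
      (∑ i, |w i x - w i y|) ≤ B₁ * |x - y|)
    (f : ℝ → ℝ) (hL : 0 ≤ L)
    (hf : ∀ x ∈ Set.Icc (0:ℝ) 1, ∀ y ∈ Set.Icc (0:ℝ) 1, |f x - f y| ≤ L * |x - y|)
    (hF : ∀ x ∈ Set.Icc (0:ℝ) 1, |f x| ≤ F) :
    ∀ x ∈ Set.Icc (0:ℝ) 1, ∀ y ∈ Set.Icc (0:ℝ) 1,
      |(∑ i, f (g i x) * w i x) - (∑ i, f (g i y) * w i y)| ≤
        (M * α₀ ^ k * L + B₁ * F) * |x - y| := by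
  intro x hx y hy
  have hFnn : 0 ≤ F := (abs_nonneg _).trans (hF x hx)
  have key : (∑ i, f (g i x) * w i x) - (∑ i, f (g i y) * w i y)
      = (∑ i, (f (g i x) - f (g i y)) * w i x) + ∑ i, f (g i y) * (w i x - w i y) := by
    rw [← Finset.sum_add_distrib, ← Finset.sum_sub_distrib]
    congr 1; ext i; ring
  rw [key]
  have h1 : |∑ i, (f (g i x) - f (g i y)) * w i x| ≤ M * α₀ ^ k * L * |x - y| := by
    calc |∑ i, (f (g i x) - f (g i y)) * w i x|
        ≤ ∑ i, |(f (g i x) - f (g i y)) * w i x| := Finset.abs_sum_le_sum_abs _ _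
      _ ≤ ∑ i, (L * (α₀ ^ k * |x - y|)) * w i x := by
          apply Finset.sum_le_sum
          intro i _
          rw [abs_mul, abs_of_nonneg (hw0 i x hx)]
          apply mul_le_mul_of_nonneg_right _ (hw0 i x hx)
          calc |f (g i x) - f (g i y)| ≤ L * |g i x - g i y| :=
                hf _ (hgmap i x hx) _ (hgmap i y hy)
            _ ≤ L * (α₀ ^ k * |x - y|) :=
                mul_le_mul_of_nonneg_left (hg i x hx y hy) hL
      _ = (L * (α₀ ^ k * |x - y|)) * ∑ i, w i x := by rw [Finset.mul_sum]
      _ ≤ (L * (α₀ ^ k * |x - y|)) * M := by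
          apply mul_le_mul_of_nonneg_left (hwM x hx)
          positivity
      _ = M * α₀ ^ k * L * |x - y| := by ring
  have h2 : |∑ i, f (g i y) * (w i x - w i y)| ≤ B₁ * F * |x - y| := by
    calc |∑ i, f (g i y) * (w i x - w i y)|
        ≤ ∑ i, |f (g i y) * (w i x - w i y)| := Finset.abs_sum_le_sum_abs _ _
      _ ≤ ∑ i, F * |w i x - w i y| := by
          apply Finset.sum_le_sum
          intro i _
          rw [abs_mul]
          exact mul_le_mul_of_nonneg_right (hF _ (hgmap i y hy)) (abs_nonneg _)
      _ = F * ∑ i, |w i x - w i y| := by rw [Finset.mul_sum]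
      _ ≤ F * (B₁ * |x - y|) := mul_le_mul_of_nonneg_left (hwB x hx y hy) hFnn
      _ = B₁ * F * |x - y| := by ring
  calc |(∑ i, (f (g i x) - f (g i y)) * w i x) + ∑ i, f (g i y) * (w i x - w i y)|
      ≤ |∑ i, (f (g i x) - f (g i y)) * w i x| + |∑ i, f (g i y) * (w i x - w i y)| :=
        abs_add_le _ _
    _ ≤ M * α₀ ^ k * L * |x - y| + B₁ * F * |x - y| := add_le_add h1 h2
    _ = (M * α₀ ^ k * L + B₁ * F) * |x - y| := by ring
end

section
/- Let Q_m be the Markov discretization operator defined by Q_m f = f_1 ψ_0 + Σ_{i=1}^{m-1} ((f_i + f_{i+1})/2) ψ_i + f_m ψ_m, where f_i = m ∫_{I_i} f dλ. Then for every Lipschitz function f on [0,1], Lip(Q_m f) ≤ (3/2) Lip(f). -/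
/-- The standard hat function `ψ_i` over the uniform partition `{i/m}` of `[0,1]`. -/
noncomputable def hat (m i : ℕ) (x : ℝ) : ℝ := max 0 (1 - |(m : ℝ) * x - (i : ℝ)|)

/-- The average of `f` over the cell `I_i = [(i-1)/m, i/m]`: `f_i = m ∫_{I_i} f dλ`. -/
noncomputable def cellAvg (m : ℕ) (f : ℝ → ℝ) (i : ℕ) : ℝ :=
  (m : ℝ) * ∫ x in (((i : ℝ) - 1) / (m : ℝ))..((i : ℝ) / (m : ℝ)), f x

/-- The Markov (Ding–Li) discretization
`Q_m f = f_1 ψ_0 + ∑_{i=1}^{m-1} ((f_i + f_{i+1})/2) ψ_i + f_m ψ_m`. -/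
noncomputable def Qm (m : ℕ) (f : ℝ → ℝ) (x : ℝ) : ℝ :=
  cellAvg m f 1 * hat m 0 x
    + (∑ i ∈ Finset.Ioo 0 m, ((cellAvg m f i + cellAvg m f (i + 1)) / 2) * hat m i x)
    + cellAvg m f m * hat m m x

/-!
On the cell `[j/m, (j+1)/m]` the function `Q_m f` is affine with slope `m (v_{j+1} - v_j)`, where
`v_j` are its nodal values. Consecutive nodal values are averages of consecutive cell averages,
and `f_{i+1} - f_i = m ∫_{I_i} (f (x + 1/m) - f x) dx` has absolute value at most `L/m`. Hence
every slope is at most `L`, and Lipschitz bounds on adjacent closed intervals glue across the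
common node; so in fact `Lip (Q_m f) ≤ Lip f`.
-/

open Set

theorem LipschitzOnWith.Icc_union_Icc {E : Type*} [PseudoMetricSpace E] {f : ℝ → E} {K : NNReal}
    {a b c : ℝ} (hab : LipschitzOnWith K f (Icc a b)) (hbc : LipschitzOnWith K f (Icc b c)) :
    LipschitzOnWith K f (Icc a c) := by
  have hordered : ∀ x ∈ Icc a c, ∀ y ∈ Icc a c, x ≤ y → dist (f x) (f y) ≤ K * dist x y := by
    intro x hx y hy hxy
    rcases le_total y b with hyb | hby
    · exact hab.dist_le_mul x ⟨hx.1, hxy.trans hyb⟩ y ⟨hy.1, hyb⟩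
    rcases le_total x b with hxb | hbx
    · calc dist (f x) (f y) ≤ dist (f x) (f b) + dist (f b) (f y) := dist_triangle _ _ _
        _ ≤ K * dist x b + K * dist b y :=
          add_le_add (hab.dist_le_mul x ⟨hx.1, hxb⟩ b ⟨hx.1.trans hxb, le_rfl⟩)
            (hbc.dist_le_mul b ⟨le_rfl, hby.trans hy.2⟩ y ⟨hby, hy.2⟩)
        _ = K * dist x y := by
          simp only [Real.dist_eq, abs_of_nonpos (sub_nonpos.2 hxb),
            abs_of_nonpos (sub_nonpos.2 hby), abs_of_nonpos (sub_nonpos.2 hxy)]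
          ring
    · exact hbc.dist_le_mul x ⟨hbx, hx.2⟩ y ⟨hbx.trans hxy, hy.2⟩
  refine LipschitzOnWith.of_dist_le_mul fun x hx y hy => ?_
  rcases le_total x y with hxy | hyx
  · exact hordered x hx y hy hxy
  · rw [dist_comm, dist_comm x]
    exact hordered y hy x hx hyx

theorem lipschitzOnWith_Icc_of_forall_Icc_succ {E : Type*} [PseudoMetricSpace E] {f : ℝ → E}
    {K : NNReal} (b : ℕ → ℝ) (n : ℕ)
    (h : ∀ j < n, LipschitzOnWith K f (Icc (b j) (b (j + 1)))) :
    LipschitzOnWith K f (Icc (b 0) (b n)) := by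
  induction n with
  | zero =>
    rw [Icc_self]
    rintro x rfl y rfl
    simp
  | succ n ih =>
    exact (ih fun j hj => h j (by omega)).Icc_union_Icc (h n n.lt_succ_self)

theorem abs_integral_comp_add_right_sub_le {f : ℝ → ℝ} {K : NNReal} {a b h : ℝ} (hab : a ≤ b)
    (hh : 0 ≤ h) (hf : LipschitzOnWith K f (Icc a (b + h))) :
    |(∫ x in a..b, f (x + h)) - ∫ x in a..b, f x| ≤ K * h * (b - a) := by
  have hmem : ∀ x ∈ Icc a b, x ∈ Icc a (b + h) := fun x hx => ⟨hx.1, by linarith [hx.2]⟩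
  have hmem_add : ∀ x ∈ Icc a b, x + h ∈ Icc a (b + h) :=
    fun x hx => ⟨by linarith [hx.1], by linarith [hx.2]⟩
  have hint : IntervalIntegrable f MeasureTheory.volume a b :=
    (hf.continuousOn.mono hmem).intervalIntegrable_of_Icc hab
  have hint_add : IntervalIntegrable (fun x => f (x + h)) MeasureTheory.volume a b :=
    (hf.continuousOn.comp (continuous_add_const h).continuousOn hmem_add).intervalIntegrable_of_Icc
      hab
  rw [← intervalIntegral.integral_sub hint_add hint, ← Real.norm_eq_abs,
    ← abs_of_nonneg (sub_nonneg.2 hab)]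
  refine intervalIntegral.norm_integral_le_of_norm_le_const fun x hx => ?_
  have hx : x ∈ Icc a b := Ioc_subset_Icc_self (uIoc_of_le hab ▸ hx)
  calc ‖f (x + h) - f x‖ = dist (f (x + h)) (f x) := (dist_eq_norm _ _).symm
    _ ≤ K * dist (x + h) x := hf.dist_le_mul _ (hmem_add x hx) _ (hmem x hx)
    _ = K * h := by rw [Real.dist_eq, add_sub_cancel_left, abs_of_nonneg hh]

theorem abs_cellAvg_succ_sub_le {m i : ℕ} {f : ℝ → ℝ} {K : NNReal} (hi : 1 ≤ i) (him : i + 1 ≤ m)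
    (hf : LipschitzOnWith K f (Icc 0 1)) :
    |cellAvg m f (i + 1) - cellAvg m f i| ≤ K / m := by
  have hm : (0 : ℝ) < m := by exact_mod_cast (show 0 < m by omega)
  have hi' : (1 : ℝ) ≤ i := by exact_mod_cast hi
  have him' : (i : ℝ) + 1 ≤ m := by exact_mod_cast him
  set a : ℝ := ((i : ℝ) - 1) / m
  set b : ℝ := (i : ℝ) / m
  have hab : a ≤ b := div_le_div_of_nonneg_right (by linarith) hm.le
  have hcell : Icc a (b + 1 / m) ⊆ Icc 0 1 := by
    refine Icc_subset_Icc (by positivity) ?_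
    rw [← add_div, div_le_one hm]
    linarith
  have hshift : cellAvg m f (i + 1) = m * ∫ x in a..b, f (x + 1 / m) := by
    rw [cellAvg, intervalIntegral.integral_comp_add_right]
    congr 2 <;> push_cast <;> ring
  have hba : b - a = 1 / m := by ring
  calc |cellAvg m f (i + 1) - cellAvg m f i|
      = m * |(∫ x in a..b, f (x + 1 / m)) - ∫ x in a..b, f x| := by
        rw [hshift, cellAvg, ← mul_sub, abs_mul, abs_of_pos hm]
    _ ≤ m * (K * (1 / m) * (b - a)) := by
        gcongr
        exact abs_integral_comp_add_right_sub_le hab (by positivity) (hf.mono hcell)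
    _ = K / m := by rw [hba]; field_simp

/-- The nodal values `Q_m f (i/m)`, namely `f_1`, `(f_i + f_{i+1})/2` for `0 < i < m` and `f_m`,
written as one formula. -/
noncomputable def nodalValue (m : ℕ) (f : ℝ → ℝ) (i : ℕ) : ℝ :=
  (cellAvg m f (max i 1) + cellAvg m f (min (i + 1) m)) / 2

theorem abs_nodalValue_succ_sub_le {m j : ℕ} {f : ℝ → ℝ} {K : NNReal} (hm : 1 ≤ m) (hj : j < m)
    (hf : LipschitzOnWith K f (Icc 0 1)) :
    |nodalValue m f (j + 1) - nodalValue m f j| ≤ K / m := by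
  have hcellAvg : ∀ i k, 1 ≤ i → i ≤ k → k ≤ i + 1 → k ≤ m →
      |cellAvg m f k - cellAvg m f i| ≤ K / m := by
    intro i k hi hik hki hkm
    obtain rfl | rfl : k = i ∨ k = i + 1 := by omega
    · rw [sub_self, abs_zero]
      positivity
    · exact abs_cellAvg_succ_sub_le hi hkm hf
  have hleft := hcellAvg (max j 1) (max (j + 1) 1) (by omega) (by omega) (by omega) (by omega)
  have hright := hcellAvg (min (j + 1) m) (min (j + 1 + 1) m) (by omega) (by omega) (by omega)
    (by omega)
  rw [nodalValue, nodalValue, abs_le]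
  constructor <;> linarith [abs_le.1 hleft, abs_le.1 hright]

section Hat

variable {m i j : ℕ} {x : ℝ}

theorem hat_eq_zero (hjx : (j : ℝ) ≤ m * x) (hxj : m * x ≤ j + 1) (hij : i ≠ j)
    (hij' : i ≠ j + 1) : hat m i x = 0 := by
  have hfar : 1 ≤ |(m : ℝ) * x - i| := by
    rcases lt_or_gt_of_ne hij with hlt | hgt
    · have : (i : ℝ) + 1 ≤ j := by exact_mod_cast hlt
      exact le_abs.2 (Or.inl (by linarith))
    · have : (j : ℝ) + 2 ≤ i := by exact_mod_cast (show j + 2 ≤ i by omega)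
      exact le_abs.2 (Or.inr (by linarith))
  exact max_eq_left (by linarith)

theorem hat_self (hjx : (j : ℝ) ≤ m * x) (hxj : m * x ≤ j + 1) : hat m j x = j + 1 - m * x := by
  rw [hat, abs_of_nonneg (by linarith), max_eq_right (by linarith)]
  ring

theorem hat_succ (hjx : (j : ℝ) ≤ m * x) (hxj : m * x ≤ j + 1) :
    hat m (j + 1) x = m * x - j := by
  rw [hat, Nat.cast_succ, abs_of_nonpos (by linarith), max_eq_right (by linarith)]
  ring

end Hat

section Qm

variable {m j : ℕ} {f : ℝ → ℝ} {x : ℝ}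

theorem Qm_eq_sum_nodalValue (hm : 1 ≤ m) :
    Qm m f x = ∑ i ∈ Finset.range (m + 1), nodalValue m f i * hat m i x := by
  have hrange : Finset.range (m + 1) = insert 0 (insert m (Finset.Ioo 0 m)) := by
    ext i
    simp only [Finset.mem_range, Finset.mem_insert, Finset.mem_Ioo]
    omega
  have hinterior : ∀ i ∈ Finset.Ioo 0 m,
      nodalValue m f i = (cellAvg m f i + cellAvg m f (i + 1)) / 2 := by
    intro i hi
    rw [Finset.mem_Ioo] at hi
    rw [nodalValue, max_eq_left (by omega), min_eq_left (by omega)]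
  rw [hrange, Finset.sum_insert (by simp only [Finset.mem_insert, Finset.mem_Ioo]; omega),
    Finset.sum_insert (by simp only [Finset.mem_Ioo]; omega),
    Finset.sum_congr rfl fun i hi => congrArg (· * hat m i x) (hinterior i hi), Qm, nodalValue,
    nodalValue, max_eq_right (by omega), min_eq_left hm, max_eq_left hm, min_eq_right (by omega)]
  ring

theorem Qm_eq_of_mem_cell (hm : 1 ≤ m) (hj : j < m) (hx : x ∈ Icc ((j : ℝ) / m) ((j + 1) / m)) :
    Qm m f x = nodalValue m f j * (j + 1 - m * x) + nodalValue m f (j + 1) * (m * x - j) := by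
  have hm' : (0 : ℝ) < m := by exact_mod_cast hm
  have hjx : (j : ℝ) ≤ m * x := by rw [← div_le_iff₀' hm']; exact hx.1
  have hxj : m * x ≤ (j : ℝ) + 1 := by rw [← le_div_iff₀' hm']; exact hx.2
  have hpair : ({j, j + 1} : Finset ℕ) ⊆ Finset.range (m + 1) := by
    intro i hi
    simp only [Finset.mem_insert, Finset.mem_singleton] at hi
    rw [Finset.mem_range]
    omega
  rw [Qm_eq_sum_nodalValue hm, ← Finset.sum_subset hpair, Finset.sum_pair (by omega),
    hat_self hjx hxj, hat_succ hjx hxj]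
  intro i _ hi
  simp only [Finset.mem_insert, Finset.mem_singleton, not_or] at hi
  rw [hat_eq_zero hjx hxj hi.1 hi.2, mul_zero]

theorem lipschitzOnWith_Qm_cell {K : NNReal} (hm : 1 ≤ m) (hj : j < m)
    (hf : LipschitzOnWith K f (Icc 0 1)) :
    LipschitzOnWith K (Qm m f) (Icc ((j : ℝ) / m) ((j + 1) / m)) := by
  have hm' : (0 : ℝ) < m := by exact_mod_cast hm
  have hslope : m * |nodalValue m f (j + 1) - nodalValue m f j| ≤ K := by
    have := mul_le_mul_of_nonneg_left (abs_nodalValue_succ_sub_le hm hj hf) hm'.le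
    rwa [mul_div_cancel₀ _ hm'.ne'] at this
  refine LipschitzOnWith.of_dist_le_mul fun x hx y hy => ?_
  rw [Qm_eq_of_mem_cell hm hj hx, Qm_eq_of_mem_cell hm hj hy, Real.dist_eq, Real.dist_eq]
  calc _ = |m * (nodalValue m f (j + 1) - nodalValue m f j) * (x - y)| := by
        congr 1
        ring
    _ = m * |nodalValue m f (j + 1) - nodalValue m f j| * |x - y| := by
        rw [abs_mul, abs_mul, abs_of_pos hm']
    _ ≤ K * |x - y| := by gcongr

theorem lipschitzOnWith_Qm {K : NNReal} (hm : 1 ≤ m) (hf : LipschitzOnWith K f (Icc 0 1)) :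
    LipschitzOnWith K (Qm m f) (Icc 0 1) := by
  have hm' : (m : ℝ) ≠ 0 := by positivity
  have := lipschitzOnWith_Icc_of_forall_Icc_succ (fun j : ℕ => (j : ℝ) / m) m fun j hj => by
    simpa only [Nat.cast_succ] using lipschitzOnWith_Qm_cell hm hj hf
  simpa only [Nat.cast_zero, zero_div, div_self hm'] using this

end Qm

/-- for Lipschitz `f`, `Lip(Q_m f) ≤ (3/2) Lip(f)`. -/
theorem stmt_9 (m : ℕ) (hm : 1 ≤ m) (f : ℝ → ℝ) (L : ℝ) (hL : 0 ≤ L)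
    (hlip : ∀ x ∈ Set.Icc (0:ℝ) 1, ∀ y ∈ Set.Icc (0:ℝ) 1, |f x - f y| ≤ L * |x - y|) :
    ∀ x ∈ Set.Icc (0:ℝ) 1, ∀ y ∈ Set.Icc (0:ℝ) 1,
      |Qm m f x - Qm m f y| ≤ (3 / 2) * L * |x - y| := by
  have hf : LipschitzOnWith L.toNNReal f (Icc 0 1) :=
    LipschitzOnWith.of_dist_le' (by simpa only [Real.dist_eq] using hlip)
  intro x hx y hy
  have hQ := (lipschitzOnWith_Qm hm hf).dist_le_mul x hx y hy
  rw [Real.dist_eq, Real.dist_eq, Real.coe_toNNReal L hL] at hQ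
  linarith [mul_nonneg hL (abs_nonneg (x - y))]
end

section
/- Let Q_m be the Markov discretization operator on [0,1] as above. Then for every Lipschitz function f, |Q_m f − f|_∞ ≤ (5/(2m)) Lip(f). -/
/-!
`Q_m f = ∑ c_i ψ_i` with `∑ ψ_i = 1` on `[0,1]`, so `Q_m f(x) - f(x)` is a convex combination
of the `c_i - f(x)` over the nodes `i/m` within `1/m` of `x`. Each coefficient `c_i` is an
average of `f` over cells containing `i/m`, hence within `L/m` of `f(i/m)`, which is itself
within `L/m` of `f(x)`. This gives `2L/m ≤ 5L/(2m)`.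
-/

open Finset Interval

theorem sum_range_max_zero_one_sub_abs (n : ℕ) {t : ℝ} (ht : 0 ≤ t) :
    ∑ i ∈ range (n + 1), max 0 (1 - |t - i|) = min 1 (max 0 (n + 1 - t)) := by
  induction n with
  | zero =>
    simp only [zero_add, range_one, sum_singleton, Nat.cast_zero, sub_zero, abs_of_nonneg ht]
    simp only [max_def, min_def]
    split_ifs <;> linarith
  | succ n ih =>
    rw [sum_range_succ, ih]
    push_cast
    rcases abs_cases (t - (n + 1)) with ⟨h, h'⟩ | ⟨h, h'⟩ <;> rw [h] <;>
      simp only [max_def, min_def] <;> split_ifs <;> linarith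

theorem abs_sum_mul_sub_le_of_sum_eq_one {ι : Type*} {s : Finset ι} {w c : ι → ℝ} {y B : ℝ}
    (hw₀ : ∀ i ∈ s, 0 ≤ w i) (hw₁ : ∑ i ∈ s, w i = 1)
    (hc : ∀ i ∈ s, w i ≠ 0 → |c i - y| ≤ B) :
    |∑ i ∈ s, c i * w i - y| ≤ B := by
  have hterm : ∀ i ∈ s, |(c i - y) * w i| ≤ B * w i := fun i hi => by
    rw [abs_mul, abs_of_nonneg (hw₀ i hi)]
    rcases eq_or_ne (w i) 0 with h | h
    · simp [h]
    · exact mul_le_mul_of_nonneg_right (hc i hi h) (hw₀ i hi)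
  calc |∑ i ∈ s, c i * w i - y| = |∑ i ∈ s, (c i - y) * w i| := by
        simp only [sub_mul, sum_sub_distrib, ← mul_sum, hw₁, mul_one]
    _ ≤ ∑ i ∈ s, B * w i := (abs_sum_le_sum_abs _ _).trans (sum_le_sum hterm)
    _ = B := by rw [← mul_sum, hw₁, mul_one]

open intervalIntegral in
theorem abs_integral_sub_mul_le {f : ℝ → ℝ} {a b p C : ℝ}
    (hf : IntervalIntegrable f MeasureTheory.volume a b) (hC : ∀ x ∈ Ι a b, |f x - f p| ≤ C) :
    |(∫ x in a..b, f x) - (b - a) * f p| ≤ C * |b - a| := by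
  rw [← smul_eq_mul, ← integral_const, ← integral_sub hf intervalIntegrable_const]
  exact norm_integral_le_of_norm_le_const (f := fun x => f x - f p) hC

theorem hat_nonneg (m i : ℕ) (x : ℝ) : 0 ≤ hat m i x := le_max_left _ _

theorem sum_range_hat {m : ℕ} {x : ℝ} (hx : x ∈ Set.Icc (0 : ℝ) 1) :
    ∑ i ∈ range (m + 1), hat m i x = 1 := by
  have hmx : 0 ≤ (m : ℝ) * x := mul_nonneg m.cast_nonneg hx.1
  have hmx' : (m : ℝ) * x ≤ m := mul_le_of_le_one_right m.cast_nonneg hx.2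
  have hmin : min 1 (max 0 ((m : ℝ) + 1 - m * x)) = 1 := by
    rw [max_eq_right (by linarith), min_eq_left (by linarith)]
  exact (sum_range_max_zero_one_sub_abs m hmx).trans hmin

theorem abs_div_sub_lt_of_hat_ne_zero {m i : ℕ} {x : ℝ} (hm : 0 < m) (h : hat m i x ≠ 0) :
    |(i : ℝ) / m - x| < 1 / m := by
  have hm' : (0 : ℝ) < m := by exact_mod_cast hm
  have hlt : |(m : ℝ) * x - i| < 1 := by
    by_contra! hle
    exact h (max_eq_left (by linarith))
  rw [show (i : ℝ) / m - x = -((m * x - i) / m) by field_simp; ring, abs_neg, abs_div,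
    abs_of_pos hm']
  exact div_lt_div_of_pos_right hlt hm'

/-- The coefficient `c_i` of `ψ_i` in `Q_m f`, for `i ≤ m`. -/
noncomputable def qmCoeff (m : ℕ) (f : ℝ → ℝ) (i : ℕ) : ℝ :=
  if i = 0 then cellAvg m f 1
  else if i = m then cellAvg m f m
  else (cellAvg m f i + cellAvg m f (i + 1)) / 2

theorem Qm_eq_sum_range {m : ℕ} (hm : 1 ≤ m) (f : ℝ → ℝ) (x : ℝ) :
    Qm m f x = ∑ i ∈ range (m + 1), qmCoeff m f i * hat m i x := by
  have hmid : ∀ i ∈ Ioo 0 m, qmCoeff m f i * hat m i x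
      = (cellAvg m f i + cellAvg m f (i + 1)) / 2 * hat m i x := fun i hi => by
    rw [mem_Ioo] at hi
    rw [qmCoeff, if_neg hi.1.ne', if_neg hi.2.ne]
  rw [sum_range_succ, sum_range_eq_add_Ico _ (by omega),
    show Ico 1 m = Ioo 0 m from Ico_add_one_left_eq_Ioo 0 m, sum_congr rfl hmid, qmCoeff,
    qmCoeff, if_pos rfl, if_neg (by omega), if_pos rfl, Qm]

section Lipschitz

variable {m : ℕ} {f : ℝ → ℝ} {L : ℝ}

theorem abs_cellAvg_sub_le (hL : 0 ≤ L)
    (hlip : ∀ x ∈ Set.Icc (0 : ℝ) 1, ∀ y ∈ Set.Icc (0 : ℝ) 1, |f x - f y| ≤ L * |x - y|)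
    {j : ℕ} (hj₁ : 1 ≤ j) (hjm : j ≤ m) {p : ℝ} (hp : p ∈ Set.Icc (((j : ℝ) - 1) / m) (j / m)) :
    |cellAvg m f j - f p| ≤ L / m := by
  set a : ℝ := ((j : ℝ) - 1) / m
  set b : ℝ := (j : ℝ) / m
  have hm : (0 : ℝ) < m := by exact_mod_cast hj₁.trans hjm
  have hba : b - a = 1 / m := by simp only [a, b]; field_simp; ring
  have hab : a ≤ b := by linarith [one_div_pos.mpr hm]
  have hsub : Set.Icc a b ⊆ Set.Icc 0 1 := Set.Icc_subset_Icc
    (div_nonneg (by simp [hj₁]) hm.le) ((div_le_one hm).mpr (by exact_mod_cast hjm))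
  have hint : IntervalIntegrable f MeasureTheory.volume a b :=
    ((LipschitzOnWith.of_dist_le' hlip).continuousOn.mono hsub).intervalIntegrable_of_Icc hab
  have hC : ∀ x ∈ Ι a b, |f x - f p| ≤ L / m := fun x hx => by
    rw [Set.uIoc_of_le hab] at hx
    have hxp : |x - p| ≤ 1 / m :=
      abs_sub_le_iff.mpr ⟨by linarith [hx.2, hp.1], by linarith [hx.1, hp.2]⟩
    calc |f x - f p| ≤ L * |x - p| := hlip x (hsub (Set.Ioc_subset_Icc_self hx)) p (hsub hp)
      _ ≤ L * (1 / m) := mul_le_mul_of_nonneg_left hxp hL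
      _ = L / m := mul_one_div L m
  have hcell : cellAvg m f j - f p = m * ((∫ x in a..b, f x) - (b - a) * f p) := by
    rw [cellAvg, hba]
    field_simp
    rfl
  have hbound := abs_integral_sub_mul_le hint hC
  rw [abs_of_nonneg (sub_nonneg.mpr hab)] at hbound
  calc |cellAvg m f j - f p| = m * |(∫ x in a..b, f x) - (b - a) * f p| := by
        rw [hcell, abs_mul, abs_of_pos hm]
    _ ≤ m * (L / m * (b - a)) := mul_le_mul_of_nonneg_left hbound hm.le
    _ = L / m := by rw [hba]; field_simp

/-- The node `i/m` lies in the cells `I_i` and `I_{i+1}` adjacent to it. -/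
theorem abs_qmCoeff_sub_le (hm : 1 ≤ m) (hL : 0 ≤ L)
    (hlip : ∀ x ∈ Set.Icc (0 : ℝ) 1, ∀ y ∈ Set.Icc (0 : ℝ) 1, |f x - f y| ≤ L * |x - y|)
    {i : ℕ} (hi : i ≤ m) :
    |qmCoeff m f i - f (i / m)| ≤ L / m := by
  have hm' : (0 : ℝ) < m := by exact_mod_cast hm
  have hleft : i ≠ 0 → |cellAvg m f i - f (i / m)| ≤ L / m := fun h =>
    abs_cellAvg_sub_le hL hlip (Nat.one_le_iff_ne_zero.mpr h) hi
      ⟨by gcongr; linarith, le_rfl⟩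
  have hright : i ≠ m → |cellAvg m f (i + 1) - f (i / m)| ≤ L / m := fun h =>
    abs_cellAvg_sub_le hL hlip (by omega) (by omega)
      ⟨by push_cast; ring_nf; rfl, by gcongr; linarith⟩
  rw [qmCoeff]
  split_ifs with h₀ hₘ
  · simpa [h₀] using hright (by omega)
  · subst hₘ
    exact hleft h₀
  · calc |(cellAvg m f i + cellAvg m f (i + 1)) / 2 - f (i / m)|
          = |(cellAvg m f i - f (i / m)) + (cellAvg m f (i + 1) - f (i / m))| / 2 := by
            rw [← abs_two, ← abs_div, abs_two]; ring_nf
      _ ≤ (|cellAvg m f i - f (i / m)| + |cellAvg m f (i + 1) - f (i / m)|) / 2 := by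
            gcongr
            exact abs_add_le _ _
      _ ≤ L / m := by linarith [hleft h₀, hright hₘ]

theorem abs_qmCoeff_sub_le_of_hat_ne_zero (hm : 1 ≤ m) (hL : 0 ≤ L)
    (hlip : ∀ x ∈ Set.Icc (0 : ℝ) 1, ∀ y ∈ Set.Icc (0 : ℝ) 1, |f x - f y| ≤ L * |x - y|)
    {i : ℕ} (hi : i ≤ m) {x : ℝ} (hx : x ∈ Set.Icc (0 : ℝ) 1) (h : hat m i x ≠ 0) :
    |qmCoeff m f i - f x| ≤ 2 * L / m := by
  have hm' : (0 : ℝ) < m := by exact_mod_cast hm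
  have hnode : (i : ℝ) / m ∈ Set.Icc (0 : ℝ) 1 :=
    ⟨by positivity, (div_le_one hm').mpr (by exact_mod_cast hi)⟩
  have hclose := abs_div_sub_lt_of_hat_ne_zero hm h
  calc |qmCoeff m f i - f x| ≤ |qmCoeff m f i - f (i / m)| + |f (i / m) - f x| :=
        abs_sub_le _ _ _
    _ ≤ L / m + L * (1 / m) := add_le_add (abs_qmCoeff_sub_le hm hL hlip hi)
        ((hlip _ hnode x hx).trans (mul_le_mul_of_nonneg_left hclose.le hL))
    _ = 2 * L / m := by ring

end Lipschitz

theorem stmt_10_general (m : ℕ) (hm : 1 ≤ m) (f : ℝ → ℝ) (L : ℝ)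
    (hlip : ∀ x ∈ Set.Icc (0:ℝ) 1, ∀ y ∈ Set.Icc (0:ℝ) 1, |f x - f y| ≤ L * |x - y|) :
    ∀ x ∈ Set.Icc (0:ℝ) 1, |Qm m f x - f x| ≤ (5 / (2 * (m : ℝ))) * L := by
  intro x hx
  have hL : 0 ≤ L := by
    simpa using (abs_nonneg _).trans (hlip 1 (Set.right_mem_Icc.mpr zero_le_one) 0
      (Set.left_mem_Icc.mpr zero_le_one))
  have hm' : (0 : ℝ) < m := by exact_mod_cast hm
  rw [Qm_eq_sum_range hm]
  calc |∑ i ∈ range (m + 1), qmCoeff m f i * hat m i x - f x| ≤ 2 * L / m :=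
        abs_sum_mul_sub_le_of_sum_eq_one (fun i _ => hat_nonneg m i x) (sum_range_hat hx)
          fun i hi => abs_qmCoeff_sub_le_of_hat_ne_zero hm hL hlip
            (Nat.lt_succ_iff.mp (mem_range.mp hi)) hx
    _ = 4 / (2 * m) * L := by field_simp; ring
    _ ≤ 5 / (2 * m) * L := by gcongr; norm_num

/-- for Lipschitz `f`, `|Q_m f − f|_∞ ≤ (5/(2m)) Lip(f)`. -/
theorem stmt_10 (m : ℕ) (hm : 1 ≤ m) (f : ℝ → ℝ) (L : ℝ) (hL : 0 ≤ L)
    (hlip : ∀ x ∈ Set.Icc (0:ℝ) 1, ∀ y ∈ Set.Icc (0:ℝ) 1, |f x - f y| ≤ L * |x - y|) :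
    ∀ x ∈ Set.Icc (0:ℝ) 1, |Qm m f x - f x| ≤ (5 / (2 * (m : ℝ))) * L :=
  stmt_10_general m hm f L hlip
end

section
/- Let Π_m be the interpolation projection and 𝓛 an operator on Lipschitz functions on [0,1] satisfying Lip(𝓛 f) ≤ α Lip(f) + B₁|f|_∞ and |𝓛 f|_∞ ≤ M |f|_∞. Define 𝓛_m = Π_m 𝓛 Π_m with mesh ε = 1/m. Then for every Lipschitz f, |(𝓛 − 𝓛_m) f|_∞ ≤ 2ε[(α + M) Lip(f) + B₁ |f|_∞] ≤ Γ ε ‖f‖, where Γ = 2 max{α + M, B₁} and ‖f‖ = Lip(f) + |f|_∞. -/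
/-- The Lipschitz constant of `f` on `[0,1]`. -/
noncomputable def lipC (f : ℝ → ℝ) : ℝ :=
  sInf {K : ℝ | 0 ≤ K ∧ ∀ x ∈ Set.Icc (0:ℝ) 1, ∀ y ∈ Set.Icc (0:ℝ) 1,
    |f x - f y| ≤ K * |x - y|}

/-- The sup norm of `f` on `[0,1]`. -/
noncomputable def supN (f : ℝ → ℝ) : ℝ :=
  sSup {C : ℝ | ∃ x ∈ Set.Icc (0:ℝ) 1, C = |f x|}

/-- `f` is Lipschitz on `[0,1]`. -/
def IsLip (f : ℝ → ℝ) : Prop :=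
  ∃ K : NNReal, LipschitzOnWith K f (Set.Icc (0:ℝ) 1)

/-- Piecewise linear interpolation of `f` at the nodes `i/m`. -/
noncomputable def piInterp (m : ℕ) (f : ℝ → ℝ) (x : ℝ) : ℝ :=
  ∑ i ∈ Finset.range (m + 1), f ((i : ℝ) / (m : ℝ)) * hat m i x

/-! Write `g = Π_m f` and split `(𝓛 - 𝓛_m) f = 𝓛 (f - g) + (𝓛 g - Π_m 𝓛 g)`. The first term is at
most `M |f - g|_∞ ≤ M ε Lip f`. The second is an interpolation error, at most
`ε Lip (𝓛 g) ≤ ε (α Lip g + B₁ |g|_∞) ≤ ε (α Lip f + B₁ |f|_∞)`, because `Π_m` increases neither the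
Lipschitz constant nor the sup norm. Linear interpolation on a cell of length `ε` is within
`ε Lip f` of `f`, so the estimate even holds with `ε` in place of `2ε`. -/

open Set

section Gluing

variable {E : Type*} [PseudoMetricSpace E] {g : ℝ → E} {K : NNReal}

theorem LipschitzOnWith.Icc_union {a b c : ℝ} (h₁ : LipschitzOnWith K g (Icc a b))
    (h₂ : LipschitzOnWith K g (Icc b c)) : LipschitzOnWith K g (Icc a c) := by
  have cross : ∀ x ∈ Icc a b, ∀ y ∈ Icc b c, dist (g x) (g y) ≤ K * dist x y := by
    intro x hx y hy
    calc dist (g x) (g y) ≤ dist (g x) (g b) + dist (g b) (g y) := dist_triangle _ _ _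
      _ ≤ K * dist x b + K * dist b y :=
          add_le_add (h₁.dist_le_mul x hx b ⟨hx.1.trans hx.2, le_rfl⟩)
            (h₂.dist_le_mul b ⟨le_rfl, hy.1.trans hy.2⟩ y hy)
      _ = K * dist x y := by
          simp only [Real.dist_eq]
          rw [abs_of_nonpos (by linarith [hx.2]), abs_of_nonpos (by linarith [hy.1]),
            abs_of_nonpos (by linarith [hx.2, hy.1])]
          ring
  refine LipschitzOnWith.of_dist_le_mul fun x hx y hy => ?_
  rcases le_total x b with hxb | hxb <;> rcases le_total y b with hyb | hyb
  · exact h₁.dist_le_mul x ⟨hx.1, hxb⟩ y ⟨hy.1, hyb⟩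
  · exact cross x ⟨hx.1, hxb⟩ y ⟨hyb, hy.2⟩
  · rw [dist_comm, dist_comm x]
    exact cross y ⟨hy.1, hyb⟩ x ⟨hxb, hx.2⟩
  · exact h₂.dist_le_mul x ⟨hxb, hx.2⟩ y ⟨hyb, hy.2⟩

theorem lipschitzOnWith_unitInterval_of_cells {m : ℕ} (hm : m ≠ 0)
    (hcell : ∀ i < m, LipschitzOnWith K g (Icc ((i : ℝ) / m) ((i + 1) / m))) :
    LipschitzOnWith K g (Icc 0 1) := by
  have hinit : ∀ j ≤ m, LipschitzOnWith K g (Icc 0 ((j : ℝ) / m)) := by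
    intro j
    induction j with
    | zero =>
      intro _
      rw [Nat.cast_zero, zero_div, Icc_self]
      exact LipschitzOnWith.of_dist_le_mul fun x hx y hy => by
        rw [mem_singleton_iff.1 hx, mem_singleton_iff.1 hy, dist_self, dist_self, mul_zero]
    | succ j ih =>
      intro hj
      push_cast
      exact (ih (by omega)).Icc_union (hcell j (by omega))
  simpa [div_self (Nat.cast_ne_zero.2 hm : (m : ℝ) ≠ 0)] using hinit m le_rfl

end Gluing

theorem lipC_nonneg (f : ℝ → ℝ) : 0 ≤ lipC f :=
  Real.sInf_nonneg fun _ hK => hK.1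

theorem lipC_le_of_lipschitzOnWith {f : ℝ → ℝ} {K : NNReal}
    (hf : LipschitzOnWith K f (Icc 0 1)) : lipC f ≤ K :=
  csInf_le ⟨0, fun _ hL => hL.1⟩
    ⟨K.2, fun x hx y hy => by simpa [Real.dist_eq] using hf.dist_le_mul x hx y hy⟩

theorem IsLip.lipschitzOnWith_lipC {f : ℝ → ℝ} (hf : IsLip f) :
    LipschitzOnWith ⟨lipC f, lipC_nonneg f⟩ f (Icc 0 1) := by
  obtain ⟨K, hK⟩ := hf
  refine LipschitzOnWith.of_dist_le_mul fun x hx y hy => ?_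
  rcases eq_or_ne x y with rfl | hxy
  · simp
  have hslope : dist (f x) (f y) / dist x y ≤ lipC f :=
    le_csInf ⟨K, K.2, fun x hx y hy => by simpa [Real.dist_eq] using hK.dist_le_mul x hx y hy⟩
      fun L hL => div_le_of_le_mul₀ dist_nonneg hL.1 (by simpa [Real.dist_eq] using hL.2 x hx y hy)
  exact (div_le_iff₀ (dist_pos.2 hxy)).1 hslope

theorem supN_le {f : ℝ → ℝ} {C : ℝ} (h : ∀ x ∈ Icc (0 : ℝ) 1, |f x| ≤ C) : supN f ≤ C :=
  csSup_le ⟨|f 0|, 0, ⟨le_rfl, zero_le_one⟩, rfl⟩ (by rintro _ ⟨x, hx, rfl⟩; exact h x hx)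

theorem IsLip.abs_le_supN {f : ℝ → ℝ} (hf : IsLip f) {x : ℝ} (hx : x ∈ Icc (0 : ℝ) 1) :
    |f x| ≤ supN f := by
  obtain ⟨K, hK⟩ := hf
  obtain ⟨C, hC⟩ := isCompact_Icc.exists_bound_of_continuousOn hK.continuousOn
  exact le_csSup ⟨C, by rintro _ ⟨y, hy, rfl⟩; exact hC y hy⟩ ⟨x, hx, rfl⟩

theorem IsLip.supN_nonneg {f : ℝ → ℝ} (hf : IsLip f) : 0 ≤ supN f :=
  (abs_nonneg _).trans (hf.abs_le_supN ⟨le_rfl, zero_le_one⟩)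

theorem abs_mul_one_sub_add_mul_le {a b C t : ℝ} (ht : t ∈ Icc (0 : ℝ) 1) (ha : |a| ≤ C)
    (hb : |b| ≤ C) : |a * (1 - t) + b * t| ≤ C := by
  have ht' : 0 ≤ 1 - t := sub_nonneg.2 ht.2
  calc |a * (1 - t) + b * t| ≤ |a| * (1 - t) + |b| * t := by
        refine (abs_add_le _ _).trans_eq ?_
        rw [abs_mul, abs_mul, abs_of_nonneg ht', abs_of_nonneg ht.1]
    _ ≤ C * (1 - t) + C * t := by gcongr; exact ht.1
    _ = C := by ring

theorem max_mul_add_le {a b x y : ℝ} (hx : 0 ≤ x) (hy : 0 ≤ y) :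
    a * x + b * y ≤ max a b * (x + y) :=
  calc a * x + b * y ≤ max a b * x + max a b * y := by
        gcongr
        · exact le_max_left a b
        · exact le_max_right a b
    _ = max a b * (x + y) := by ring

section Cells

variable {m : ℕ}

theorem natCast_div_mem_Icc {i : ℕ} (hi : i ≤ m) : (i : ℝ) / m ∈ Icc (0 : ℝ) 1 :=
  ⟨by positivity, div_le_one_of_le₀ (by exact_mod_cast hi) (Nat.cast_nonneg m)⟩

theorem natCast_add_one_div_mem_Icc {i : ℕ} (hi : i < m) : ((i : ℝ) + 1) / m ∈ Icc (0 : ℝ) 1 := by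
  exact_mod_cast natCast_div_mem_Icc (Nat.succ_le_of_lt hi)

theorem left_mem_cell (a : ℝ) : a / m ∈ Icc (a / m) ((a + 1) / m) :=
  left_mem_Icc.2 (by gcongr; linarith)

theorem right_mem_cell (a : ℝ) : (a + 1) / m ∈ Icc (a / m) ((a + 1) / m) :=
  right_mem_Icc.2 (by gcongr; linarith)

theorem mul_sub_mem_Icc_iff {a x : ℝ} (hm : (0 : ℝ) < m) :
    m * x - a ∈ Icc (0 : ℝ) 1 ↔ x ∈ Icc (a / m) ((a + 1) / m) := by
  simp only [mem_Icc, div_le_iff₀ hm, le_div_iff₀ hm, sub_nonneg, sub_le_iff_le_add]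
  constructor <;> rintro ⟨h₁, h₂⟩ <;> constructor <;> linarith

theorem abs_sub_le_of_mem_cell {a x y : ℝ} (hx : x ∈ Icc (a / m) ((a + 1) / m))
    (hy : y ∈ Icc (a / m) ((a + 1) / m)) : |x - y| ≤ 1 / m := by
  rw [add_div] at hx hy
  exact abs_sub_le_iff.2 ⟨by linarith [hx.2, hy.1], by linarith [hx.1, hy.2]⟩

theorem exists_mem_cell (hm : m ≠ 0) {x : ℝ} (hx : x ∈ Icc (0 : ℝ) 1) :
    ∃ i < m, x ∈ Icc ((i : ℝ) / m) ((i + 1) / m) := by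
  have hm' : (0 : ℝ) < m := Nat.cast_pos.2 (Nat.pos_of_ne_zero hm)
  have hmx : 0 ≤ (m : ℝ) * x := mul_nonneg hm'.le hx.1
  rcases hx.2.lt_or_eq with hx1 | rfl
  · refine ⟨⌊(m : ℝ) * x⌋₊, (Nat.floor_lt hmx).2 (by nlinarith), (mul_sub_mem_Icc_iff hm').1 ?_⟩
    exact ⟨sub_nonneg.2 (Nat.floor_le hmx), by linarith [Nat.lt_floor_add_one ((m : ℝ) * x)]⟩
  · refine ⟨m - 1, by omega, (mul_sub_mem_Icc_iff hm').1 ?_⟩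
    rw [Nat.cast_pred (Nat.pos_of_ne_zero hm)]
    norm_num

theorem piInterp_eq_of_mem_cell (f : ℝ → ℝ) {i : ℕ} (hi : i < m) {x : ℝ}
    (hx : x ∈ Icc ((i : ℝ) / m) ((i + 1) / m)) :
    piInterp m f x = f (i / m) * (1 - (m * x - i)) + f ((i + 1) / m) * (m * x - i) := by
  have ht := (mul_sub_mem_Icc_iff (a := (i : ℝ)) (Nat.cast_pos.2 (by omega) : (0 : ℝ) < m)).2 hx
  set t := (m : ℝ) * x - i with ht_def
  have hfar : ∀ j : ℕ, j ≠ i → j ≠ i + 1 → hat m j x = 0 := by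
    intro j hji hji1
    refine max_eq_left (sub_nonpos.2 ?_)
    rcases Nat.lt_or_gt_of_ne hji with hj | hj
    · have : (j : ℝ) + 1 ≤ i := by exact_mod_cast hj
      rw [abs_of_nonneg (by linarith [ht.1])]
      linarith [ht.1]
    · have : (i : ℝ) + 2 ≤ j := by exact_mod_cast (show i + 2 ≤ j by omega)
      rw [abs_of_nonpos (by linarith [ht.2])]
      linarith [ht.2]
  have hleft : hat m i x = 1 - t := by
    rw [hat, ← ht_def, abs_of_nonneg ht.1]
    exact max_eq_right (sub_nonneg.2 ht.2)
  have hright : hat m (i + 1) x = t := by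
    rw [hat, Nat.cast_succ, show (m : ℝ) * x - (i + 1) = t - 1 by ring,
      abs_of_nonpos (sub_nonpos.2 ht.2), neg_sub, sub_sub_cancel]
    exact max_eq_right ht.1
  rw [piInterp, Finset.sum_eq_add i (i + 1) (by omega)
    (fun j _ hj => by rw [hfar j hj.1 hj.2, mul_zero])
    (fun h => absurd (Finset.mem_range.2 (by omega)) h)
    (fun h => absurd (Finset.mem_range.2 (by omega)) h), hleft, hright]
  push_cast
  ring

theorem abs_piInterp_le (hm : m ≠ 0) {f : ℝ → ℝ} {C : ℝ}
    (hC : ∀ y ∈ Icc (0 : ℝ) 1, |f y| ≤ C) {x : ℝ} (hx : x ∈ Icc (0 : ℝ) 1) :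
    |piInterp m f x| ≤ C := by
  obtain ⟨i, hi, hxi⟩ := exists_mem_cell hm hx
  rw [piInterp_eq_of_mem_cell f hi hxi]
  refine abs_mul_one_sub_add_mul_le ((mul_sub_mem_Icc_iff (by positivity)).2 hxi)
    (hC _ (natCast_div_mem_Icc hi.le)) (hC _ (natCast_add_one_div_mem_Icc hi))

theorem abs_sub_piInterp_le (hm : m ≠ 0) {f : ℝ → ℝ} {K : NNReal}
    (hf : LipschitzOnWith K f (Icc 0 1)) {x : ℝ} (hx : x ∈ Icc (0 : ℝ) 1) :
    |f x - piInterp m f x| ≤ K / m := by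
  obtain ⟨i, hi, hxi⟩ := exists_mem_cell hm hx
  have hnode : ∀ y ∈ Icc ((i : ℝ) / m) ((i + 1) / m), y ∈ Icc (0 : ℝ) 1 →
      |f x - f y| ≤ K / m := by
    intro y hyi hy
    calc |f x - f y| ≤ K * |x - y| := by simpa [Real.dist_eq] using hf.dist_le_mul x hx y hy
      _ ≤ K * (1 / m) := by gcongr; exact abs_sub_le_of_mem_cell hxi hyi
      _ = K / m := mul_one_div _ _
  rw [piInterp_eq_of_mem_cell f hi hxi, show ∀ a b c t : ℝ,
    c - (a * (1 - t) + b * t) = (c - a) * (1 - t) + (c - b) * t by intros; ring]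
  exact abs_mul_one_sub_add_mul_le ((mul_sub_mem_Icc_iff (by positivity)).2 hxi)
    (hnode _ (left_mem_cell _) (natCast_div_mem_Icc hi.le))
    (hnode _ (right_mem_cell _) (natCast_add_one_div_mem_Icc hi))

theorem LipschitzOnWith.piInterp (hm : m ≠ 0) {f : ℝ → ℝ} {K : NNReal}
    (hf : LipschitzOnWith K f (Icc 0 1)) : LipschitzOnWith K (piInterp m f) (Icc 0 1) := by
  refine lipschitzOnWith_unitInterval_of_cells hm fun i hi =>
    LipschitzOnWith.of_dist_le_mul fun x hx y hy => ?_
  have hm' : (0 : ℝ) < m := Nat.cast_pos.2 (Nat.pos_of_ne_zero hm)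
  have hstep : |f ((i + 1) / m) - f (i / m)| ≤ K / m :=
    calc |f ((i + 1) / m) - f (i / m)| ≤ K * |((i : ℝ) + 1) / m - i / m| := by
          simpa [Real.dist_eq] using hf.dist_le_mul _ (natCast_add_one_div_mem_Icc hi) _
            (natCast_div_mem_Icc hi.le)
      _ ≤ K * (1 / m) := by
          gcongr; exact abs_sub_le_of_mem_cell (right_mem_cell _) (left_mem_cell _)
      _ = K / m := mul_one_div _ _
  rw [Real.dist_eq, Real.dist_eq, piInterp_eq_of_mem_cell f hi hx, piInterp_eq_of_mem_cell f hi hy]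
  calc _ = |(f ((i + 1) / m) - f (i / m)) * (m * (x - y))| := by congr 1; ring
    _ = |f ((i + 1) / m) - f (i / m)| * (m * |x - y|) := by
        rw [abs_mul, abs_mul, abs_of_pos hm']
    _ ≤ K / m * (m * |x - y|) := by gcongr
    _ = K * |x - y| := by field_simp

end Cells

section Interpolation

variable {m : ℕ} {f : ℝ → ℝ}

theorem IsLip.piInterp (hm : m ≠ 0) (hf : IsLip f) : IsLip (piInterp m f) :=
  ⟨_, hf.lipschitzOnWith_lipC.piInterp hm⟩

theorem lipC_piInterp_le (hm : m ≠ 0) (hf : IsLip f) : lipC (piInterp m f) ≤ lipC f :=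
  lipC_le_of_lipschitzOnWith (hf.lipschitzOnWith_lipC.piInterp hm)

theorem supN_piInterp_le (hm : m ≠ 0) (hf : IsLip f) : supN (piInterp m f) ≤ supN f :=
  supN_le fun _ hx => abs_piInterp_le hm (fun _ hy => hf.abs_le_supN hy) hx

theorem abs_sub_piInterp_le_lipC (hm : m ≠ 0) (hf : IsLip f) {x : ℝ}
    (hx : x ∈ Icc (0 : ℝ) 1) : |f x - piInterp m f x| ≤ lipC f / m :=
  abs_sub_piInterp_le hm hf.lipschitzOnWith_lipC hx

theorem supN_sub_piInterp_le (hm : m ≠ 0) (hf : IsLip f) :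
    supN (f - piInterp m f) ≤ lipC f / m :=
  supN_le fun _ hx => abs_sub_piInterp_le_lipC hm hf hx

end Interpolation

theorem stmt_13_general (𝓛 : (ℝ → ℝ) →ₗ[ℝ] (ℝ → ℝ)) (α B₁ M : ℝ)
    (hα : 0 < α) (hB₁ : 0 ≤ B₁) (hM : 0 < M)
    (h𝓛lip : ∀ f, IsLip f → IsLip (𝓛 f))
    (hLY : ∀ f, IsLip f → lipC (𝓛 f) ≤ α * lipC f + B₁ * supN f)
    (hbdd : ∀ f, supN (𝓛 f) ≤ M * supN f)
    (m : ℕ) (hm : 1 ≤ m) (f : ℝ → ℝ) (hf : IsLip f) :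
    (∀ x ∈ Set.Icc (0:ℝ) 1,
      |𝓛 f x - piInterp m (𝓛 (piInterp m f)) x| ≤
        2 * (1 / (m : ℝ)) * ((α + M) * lipC f + B₁ * supN f)) ∧
    2 * (1 / (m : ℝ)) * ((α + M) * lipC f + B₁ * supN f) ≤
      (2 * max (α + M) B₁) * (1 / (m : ℝ)) * (lipC f + supN f) := by
  have hm₀ : m ≠ 0 := by omega
  set g := piInterp m f
  have hg : IsLip g := hf.piInterp hm₀
  have hfg : IsLip (f - g) := ⟨_, hf.lipschitzOnWith_lipC.sub hg.lipschitzOnWith_lipC⟩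
  have hLg : lipC (𝓛 g) ≤ α * lipC f + B₁ * supN f := (hLY g hg).trans (by
    gcongr
    exacts [lipC_piInterp_le hm₀ hf, supN_piInterp_le hm₀ hf])
  have hbound : 0 ≤ (α + M) * lipC f + B₁ * supN f := by
    have := lipC_nonneg f; have := hf.supN_nonneg; positivity
  refine ⟨fun x hx => ?_, ?_⟩
  · calc |𝓛 f x - piInterp m (𝓛 g) x|
        ≤ |𝓛 (f - g) x| + |𝓛 g x - piInterp m (𝓛 g) x| := by
          rw [map_sub]; exact abs_sub_le _ _ _
      _ ≤ M * (lipC f / m) + (α * lipC f + B₁ * supN f) / m := by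
          gcongr
          · exact ((h𝓛lip _ hfg).abs_le_supN hx).trans <| (hbdd _).trans <|
              mul_le_mul_of_nonneg_left (supN_sub_piInterp_le hm₀ hf) hM.le
          · exact (abs_sub_piInterp_le_lipC hm₀ (h𝓛lip g hg) hx).trans (by gcongr)
      _ = 1 / m * ((α + M) * lipC f + B₁ * supN f) := by ring
      _ ≤ 2 * (1 / m) * ((α + M) * lipC f + B₁ * supN f) :=
          mul_le_mul_of_nonneg_right (by linarith [show (0 : ℝ) ≤ 1 / m by positivity]) hbound
  · calc 2 * (1 / (m : ℝ)) * ((α + M) * lipC f + B₁ * supN f)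
        ≤ 2 * (1 / (m : ℝ)) * (max (α + M) B₁ * (lipC f + supN f)) := by
          gcongr; exact max_mul_add_le (lipC_nonneg f) hf.supN_nonneg
      _ = _ := by ring

/-- with `𝓛_m = Π_m 𝓛 Π_m` and mesh `ε = 1/m`,
`|(𝓛 − 𝓛_m) f|_∞ ≤ 2ε[(α + M) Lip(f) + B₁ |f|_∞] ≤ Γ ε ‖f‖`, where
`Γ = 2 max{α + M, B₁}` and `‖f‖ = Lip(f) + |f|_∞`. -/
theorem stmt_13 (𝓛 : (ℝ → ℝ) →ₗ[ℝ] (ℝ → ℝ)) (α B₁ M : ℝ)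
    (hα : 0 < α) (hα1 : α < 1) (hB₁ : 0 ≤ B₁) (hM : 0 < M)
    (h𝓛lip : ∀ f, IsLip f → IsLip (𝓛 f))
    (hLY : ∀ f, IsLip f → lipC (𝓛 f) ≤ α * lipC f + B₁ * supN f)
    (hbdd : ∀ f, supN (𝓛 f) ≤ M * supN f)
    (m : ℕ) (hm : 1 ≤ m) (f : ℝ → ℝ) (hf : IsLip f) :
    (∀ x ∈ Set.Icc (0:ℝ) 1,
      |𝓛 f x - piInterp m (𝓛 (piInterp m f)) x| ≤
        2 * (1 / (m : ℝ)) * ((α + M) * lipC f + B₁ * supN f)) ∧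
    2 * (1 / (m : ℝ)) * ((α + M) * lipC f + B₁ * supN f) ≤
      (2 * max (α + M) B₁) * (1 / (m : ℝ)) * (lipC f + supN f) :=
  stmt_13_general 𝓛 α B₁ M hα hB₁ hM h𝓛lip hLY hbdd m hm f hf
end

section
/- Let 𝓛_m = Π_m 𝓛 Π_m where Π_m is the interpolation projection and 𝓛 satisfies Lip(𝓛 f) ≤ α Lip(f) + B₁|f|_∞ with α ∈ (0,1), and |𝓛ⁿ f|_∞ ≤ Mⁿ|f|_∞. Then Lip(𝓛_m f) ≤ α Lip(f) + B₁|f|_∞, and for all n ≥ 1, ‖𝓛_mⁿ f‖ ≤ αⁿ ‖f‖ + C₃ Mⁿ |f|_∞, where C₃ = B₁/(M(1−α)) + 1 and ‖f‖ = Lip(f) + |f|_∞ (assuming M ≥ 1). -/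
theorem supN_nonneg (g : ℝ → ℝ) : 0 ≤ supN g :=
  Real.sSup_nonneg <| by
    rintro _ ⟨x, -, rfl⟩
    exact abs_nonneg _

section LasotaYorke

variable {E : Type*} (lip sup : E → ℝ) (P : E → Prop)

theorem sup_conj_le {Pr T : E → E} {M : ℝ} (hM : 0 ≤ M)
    (hPr : ∀ g, sup (Pr g) ≤ sup g) (hT : ∀ g, sup (T g) ≤ M * sup g) (g : E) :
    sup (Pr (T (Pr g))) ≤ M * sup g :=
  calc sup (Pr (T (Pr g))) ≤ sup (T (Pr g)) := hPr _
    _ ≤ M * sup (Pr g) := hT _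
    _ ≤ M * sup g := mul_le_mul_of_nonneg_left (hPr g) hM

theorem lip_conj_le {Pr T : E → E} {α B : ℝ} (hα : 0 ≤ α) (hB : 0 ≤ B)
    (hPrP : ∀ g, P g → P (Pr g)) (hPrlip : ∀ g, P g → lip (Pr g) ≤ lip g)
    (hPrsup : ∀ g, sup (Pr g) ≤ sup g) (hTP : ∀ g, P g → P (T g))
    (hLY : ∀ g, P g → lip (T g) ≤ α * lip g + B * sup g) {g : E} (hg : P g) :
    lip (Pr (T (Pr g))) ≤ α * lip g + B * sup g :=
  calc lip (Pr (T (Pr g))) ≤ lip (T (Pr g)) := hPrlip _ (hTP _ (hPrP g hg))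
    _ ≤ α * lip (Pr g) + B * sup (Pr g) := hLY _ (hPrP g hg)
    _ ≤ α * lip g + B * sup g := by
      gcongr
      exacts [hPrlip g hg, hPrsup g]

theorem sup_iterate_le {T : E → E} {M : ℝ} (hM : 0 ≤ M) (hT : ∀ g, sup (T g) ≤ M * sup g)
    (g : E) (n : ℕ) : sup (T^[n] g) ≤ M ^ n * sup g := by
  induction n with
  | zero => simp
  | succ n ih =>
    rw [Function.iterate_succ_apply']
    calc sup (T (T^[n] g)) ≤ M * sup (T^[n] g) := hT _
      _ ≤ M * (M ^ n * sup g) := mul_le_mul_of_nonneg_left ih hM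
      _ = M ^ (n + 1) * sup g := by ring

theorem lip_iterate_le {T : E → E} {α B M : ℝ} (hα : 0 ≤ α) (hα1 : α < 1) (hB : 0 ≤ B)
    (hM : 1 ≤ M) (hTP : ∀ g, P g → P (T g))
    (hLY : ∀ g, P g → lip (T g) ≤ α * lip g + B * sup g)
    (hT : ∀ g, sup (T g) ≤ M * sup g) {g : E} (hg : P g) (hg0 : 0 ≤ sup g) (n : ℕ) :
    lip (T^[n] g) ≤ α ^ n * lip g + B / (M * (1 - α)) * M ^ n * sup g := by
  set c := B / (M * (1 - α))
  have hc : 0 ≤ c := div_nonneg hB (mul_nonneg (by linarith) (by linarith))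
  -- `c M = B / (1 - α)` is the fixed point of `x ↦ α x + B`.
  have hcM : c * M = α * (c * M) + B := by
    have : 1 - α ≠ 0 := by linarith
    unfold c; field_simp; ring
  have hc_step : α * c + B ≤ c * M := by
    linarith [mul_le_mul_of_nonneg_left (le_mul_of_one_le_right hc hM) hα]
  induction n with
  | zero => simpa using mul_nonneg hc hg0
  | succ n ih =>
    have hsup_n := sup_iterate_le sup (by linarith) hT g n
    have hMn : 0 ≤ M ^ n * sup g := mul_nonneg (pow_nonneg (by linarith) n) hg0
    rw [Function.iterate_succ_apply']
    calc lip (T (T^[n] g)) ≤ α * lip (T^[n] g) + B * sup (T^[n] g) :=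
          hLY _ (Function.Iterate.rec P hg hTP n)
      _ ≤ α * (α ^ n * lip g + c * M ^ n * sup g) + B * (M ^ n * sup g) := by gcongr
      _ = α ^ (n + 1) * lip g + (α * c + B) * (M ^ n * sup g) := by ring
      _ ≤ α ^ (n + 1) * lip g + c * M * (M ^ n * sup g) := by gcongr
      _ = α ^ (n + 1) * lip g + c * M ^ (n + 1) * sup g := by ring

end LasotaYorke

theorem stmt_14_general (𝓛 Pr : Module.End ℝ (ℝ → ℝ)) (α B₁ M : ℝ)
    (hα : 0 < α) (hα1 : α < 1) (hB₁ : 0 ≤ B₁) (hM : 1 ≤ M)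
    (hPrlipkeep : ∀ g, IsLip g → IsLip (Pr g))
    (hPrlip : ∀ g, IsLip g → lipC (Pr g) ≤ lipC g)
    (hPrsup : ∀ g, supN (Pr g) ≤ supN g)
    (hLlip : ∀ f, IsLip f → IsLip (𝓛 f))
    (hLY : ∀ f, IsLip f → lipC (𝓛 f) ≤ α * lipC f + B₁ * supN f)
    (hbdd : ∀ n : ℕ, ∀ f, supN ((𝓛 ^ n) f) ≤ M ^ n * supN f) :
    (∀ f, IsLip f → lipC ((Pr ∘ₗ 𝓛 ∘ₗ Pr) f) ≤ α * lipC f + B₁ * supN f) ∧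
    (∀ n : ℕ, 1 ≤ n → ∀ f, IsLip f →
      lipC (((Pr ∘ₗ 𝓛 ∘ₗ Pr) ^ n) f) + supN (((Pr ∘ₗ 𝓛 ∘ₗ Pr) ^ n) f) ≤
        α ^ n * (lipC f + supN f) + (B₁ / (M * (1 - α)) + 1) * M ^ n * supN f) := by
  have hL_P : ∀ f, IsLip f → IsLip ((Pr ∘ₗ 𝓛 ∘ₗ Pr) f) := fun f hf =>
    hPrlipkeep _ (hLlip _ (hPrlipkeep f hf))
  have hL_lip : ∀ f, IsLip f → lipC ((Pr ∘ₗ 𝓛 ∘ₗ Pr) f) ≤ α * lipC f + B₁ * supN f :=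
    fun f hf => lip_conj_le lipC supN IsLip hα.le hB₁ hPrlipkeep hPrlip hPrsup hLlip hLY hf
  have hL_sup : ∀ f, supN ((Pr ∘ₗ 𝓛 ∘ₗ Pr) f) ≤ M * supN f :=
    sup_conj_le supN (by linarith) hPrsup (fun g => by simpa using hbdd 1 g)
  refine ⟨hL_lip, fun n _ f hf => ?_⟩
  rw [Module.End.pow_apply]
  have hlip := lip_iterate_le lipC supN IsLip hα.le hα1 hB₁ hM hL_P hL_lip hL_sup hf
    (supN_nonneg f) n
  have hsup := sup_iterate_le supN (by linarith) hL_sup f n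
  have hαn : 0 ≤ α ^ n * supN f := mul_nonneg (pow_nonneg hα.le n) (supN_nonneg f)
  linear_combination hlip + hsup + hαn

/-- with `𝓛_m = Π_m 𝓛 Π_m`, where `Π_m` is the interpolation
projection (`Π² = Π`, `Lip(Π g) ≤ Lip g`, `|Π g|_∞ ≤ |g|_∞`) and `𝓛` satisfies
`Lip(𝓛 f) ≤ α Lip f + B₁ |f|_∞` (`0 < α < 1`) and `|𝓛ⁿ f|_∞ ≤ Mⁿ |f|_∞`
(`M ≥ 1`), one has `Lip(𝓛_m f) ≤ α Lip f + B₁ |f|_∞` and, for all `n ≥ 1`,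
`‖𝓛_mⁿ f‖ ≤ αⁿ ‖f‖ + C₃ Mⁿ |f|_∞` with `C₃ = B₁/(M(1−α)) + 1`. -/
theorem stmt_14 (𝓛 Pr : Module.End ℝ (ℝ → ℝ)) (α B₁ M : ℝ)
    (hα : 0 < α) (hα1 : α < 1) (hB₁ : 0 ≤ B₁) (hM : 1 ≤ M)
    (hPrproj : Pr ∘ₗ Pr = Pr)
    (hPrlipkeep : ∀ g, IsLip g → IsLip (Pr g))
    (hPrlip : ∀ g, IsLip g → lipC (Pr g) ≤ lipC g)
    (hPrsup : ∀ g, supN (Pr g) ≤ supN g)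
    (hLlip : ∀ f, IsLip f → IsLip (𝓛 f))
    (hLY : ∀ f, IsLip f → lipC (𝓛 f) ≤ α * lipC f + B₁ * supN f)
    (hbdd : ∀ n : ℕ, ∀ f, supN ((𝓛 ^ n) f) ≤ M ^ n * supN f) :
    (∀ f, IsLip f → lipC ((Pr ∘ₗ 𝓛 ∘ₗ Pr) f) ≤ α * lipC f + B₁ * supN f) ∧
    (∀ n : ℕ, 1 ≤ n → ∀ f, IsLip f →
      lipC (((Pr ∘ₗ 𝓛 ∘ₗ Pr) ^ n) f) + supN (((Pr ∘ₗ 𝓛 ∘ₗ Pr) ^ n) f) ≤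
        α ^ n * (lipC f + supN f) + (B₁ / (M * (1 - α)) + 1) * M ^ n * supN f) :=
  stmt_14_general 𝓛 Pr α B₁ M hα hα1 hB₁ hM hPrlipkeep hPrlip hPrsup hLlip hLY hbdd
end

section
/- Let 𝓛_m be a bounded linear operator on Lipschitz functions on [0,1] satisfying Lip(𝓛_m g) ≤ α Lip(g) + B₁ |g|_∞ with 0 < α < r. Suppose z ∈ ℂ with |z| ≥ r and z − 𝓛_m is invertible. If h = (z − 𝓛_m)^{-1} u with ‖u‖ ≤ 1 (where ‖·‖ = Lip(·) + |·|_∞), then ‖h‖ ≤ (B₁/(r−α) + 1)|h|_∞ + 1/(r−α). -/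
/-- The Lipschitz constant of a complex-valued `f` on `[0,1]`. -/
noncomputable def lipCC (f : ℝ → ℂ) : ℝ :=
  sInf {K : ℝ | 0 ≤ K ∧ ∀ x ∈ Set.Icc (0:ℝ) 1, ∀ y ∈ Set.Icc (0:ℝ) 1,
    ‖f x - f y‖ ≤ K * |x - y|}

/-- The sup norm of a complex-valued `f` on `[0,1]`. -/
noncomputable def supNC (f : ℝ → ℂ) : ℝ :=
  sSup {C : ℝ | ∃ x ∈ Set.Icc (0:ℝ) 1, C = ‖f x‖}

/-- `f` is Lipschitz on `[0,1]`. -/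
def IsLipC (f : ℝ → ℂ) : Prop :=
  ∃ K : NNReal, LipschitzOnWith K f (Set.Icc (0:ℝ) 1)

/-! Since `z • h = 𝓛m h + u`, the triangle inequality and the Lasota–Yorke inequality give
`|z| Lip h ≤ α Lip h + B₁ |h|_∞ + Lip u`, and `|z| ≥ r > α` lets one solve for `Lip h`. -/

open Set

lemma lipCC_nonneg (f : ℝ → ℂ) : 0 ≤ lipCC f :=
  Real.sInf_nonneg fun _ hK => hK.1

lemma supNC_nonneg (f : ℝ → ℂ) : 0 ≤ supNC f :=
  Real.sSup_nonneg fun _ ⟨_, _, hC⟩ => hC ▸ norm_nonneg _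

lemma lipCC_le {f : ℝ → ℂ} {K : ℝ} (hK : 0 ≤ K)
    (hf : ∀ x ∈ Icc (0:ℝ) 1, ∀ y ∈ Icc (0:ℝ) 1, ‖f x - f y‖ ≤ K * |x - y|) :
    lipCC f ≤ K :=
  csInf_le ⟨0, fun _ hK' => hK'.1⟩ ⟨hK, hf⟩

lemma IsLipC.sub {f g : ℝ → ℂ} (hf : IsLipC f) (hg : IsLipC g) : IsLipC (f - g) :=
  let ⟨_, hK⟩ := hf; let ⟨_, hL⟩ := hg; ⟨_, hK.sub hL⟩

lemma IsLipC.const_smul {f : ℝ → ℂ} (hf : IsLipC f) (c : ℂ) : IsLipC (c • f) :=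
  let ⟨_, hK⟩ := hf; ⟨_, (lipschitzWith_smul c).comp_lipschitzOnWith hK⟩

lemma IsLipC.norm_sub_le {f : ℝ → ℂ} (hf : IsLipC f) {x y : ℝ}
    (hx : x ∈ Icc (0:ℝ) 1) (hy : y ∈ Icc (0:ℝ) 1) :
    ‖f x - f y‖ ≤ lipCC f * |x - y| := by
  rcases eq_or_ne x y with rfl | hxy
  · simp
  have hpos : 0 < |x - y| := abs_pos.2 (sub_ne_zero.2 hxy)
  obtain ⟨K, hK⟩ := hf
  have hdiv : ‖f x - f y‖ / |x - y| ≤ lipCC f := by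
    refine le_csInf ⟨K, K.2, fun x hx y hy => ?_⟩ fun K' hK' => ?_
    · simpa [dist_eq_norm, Real.dist_eq] using hK.dist_le_mul x hx y hy
    · exact (div_le_iff₀ hpos).2 (hK'.2 x hx y hy)
  exact (div_le_iff₀ hpos).1 hdiv

lemma lipCC_add_le {f g : ℝ → ℂ} (hf : IsLipC f) (hg : IsLipC g) :
    lipCC (f + g) ≤ lipCC f + lipCC g := by
  refine lipCC_le (add_nonneg (lipCC_nonneg f) (lipCC_nonneg g)) fun x hx y hy => ?_
  calc ‖(f + g) x - (f + g) y‖ = ‖(f x - f y) + (g x - g y)‖ := by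
        rw [Pi.add_apply, Pi.add_apply, add_sub_add_comm]
    _ ≤ ‖f x - f y‖ + ‖g x - g y‖ := norm_add_le _ _
    _ ≤ lipCC f * |x - y| + lipCC g * |x - y| :=
        add_le_add (hf.norm_sub_le hx hy) (hg.norm_sub_le hx hy)
    _ = (lipCC f + lipCC g) * |x - y| := by ring

/-- No Lipschitz hypothesis is needed: if `f` is not Lipschitz, neither is `c • f` for `c ≠ 0`,
and both sides are the junk value `sInf ∅ = 0`. -/
lemma lipCC_const_smul (c : ℂ) (f : ℝ → ℂ) : lipCC (c • f) = ‖c‖ * lipCC f := by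
  rcases eq_or_ne c 0 with rfl | hc
  · rw [norm_zero, zero_mul]
    exact le_antisymm (lipCC_le le_rfl fun x _ y _ => by simp) (lipCC_nonneg _)
  have hc' : 0 < ‖c‖ := norm_pos_iff.2 hc
  rw [lipCC, lipCC, ← smul_eq_mul, ← Real.sInf_smul_of_nonneg hc'.le]
  congr 1
  ext K
  rw [mem_smul_set_iff_inv_smul_mem₀ hc'.ne', mem_ofPred_eq, mem_ofPred_eq, smul_eq_mul,
    mul_nonneg_iff_of_pos_left (inv_pos.2 hc')]
  simp only [Pi.smul_apply, ← smul_sub, norm_smul, mul_assoc, le_inv_mul_iff₀ hc']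

theorem stmt_15_general (𝓛m : Module.End ℂ (ℝ → ℂ)) (α B₁ r : ℝ)
    (hαr : α < r)
    (hLY : ∀ g, IsLipC g → lipCC (𝓛m g) ≤ α * lipCC g + B₁ * supNC g)
    (z : ℂ) (hz : r ≤ ‖z‖)
    (h u : ℝ → ℂ) (hh : IsLipC h) (hu : IsLipC u)
    (hres : z • h - 𝓛m h = u)
    (hu1 : lipCC u + supNC u ≤ 1) :
    lipCC h + supNC h ≤ (B₁ / (r - α) + 1) * supNC h + 1 / (r - α) := by
  have hLh : IsLipC (𝓛m h) := by
    rw [← sub_sub_cancel (z • h) (𝓛m h), hres]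
    exact (hh.const_smul z).sub hu
  have hlip : r * lipCC h ≤ α * lipCC h + B₁ * supNC h + 1 :=
    calc r * lipCC h ≤ ‖z‖ * lipCC h := mul_le_mul_of_nonneg_right hz (lipCC_nonneg h)
      _ = lipCC (𝓛m h + u) := by rw [← lipCC_const_smul, ← hres, add_sub_cancel]
      _ ≤ lipCC (𝓛m h) + lipCC u := lipCC_add_le hLh hu
      _ ≤ α * lipCC h + B₁ * supNC h + 1 := by linarith [hLY h hh, supNC_nonneg u]
  have hlip' : lipCC h ≤ (B₁ * supNC h + 1) / (r - α) := by
    rw [le_div_iff₀ (sub_pos.2 hαr)]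
    linarith
  calc lipCC h + supNC h ≤ (B₁ * supNC h + 1) / (r - α) + supNC h := by linarith
    _ = (B₁ / (r - α) + 1) * supNC h + 1 / (r - α) := by ring

/-- resolvent estimate.  If `𝓛_m` satisfies the Lasota–Yorke
inequality `Lip(𝓛_m g) ≤ α Lip g + B₁ |g|_∞` with `0 < α < r`, `|z| ≥ r`, and
`h = (z − 𝓛_m)⁻¹ u` (i.e. `z•h − 𝓛_m h = u`) with `‖u‖ ≤ 1`, then
`‖h‖ ≤ (B₁/(r−α) + 1) |h|_∞ + 1/(r−α)`, where `‖f‖ = Lip(f) + |f|_∞`. -/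
theorem stmt_15 (𝓛m : Module.End ℂ (ℝ → ℂ)) (α B₁ r : ℝ)
    (hα : 0 < α) (hαr : α < r) (hB₁ : 0 ≤ B₁)
    (hLlip : ∀ g, IsLipC g → IsLipC (𝓛m g))
    (hLY : ∀ g, IsLipC g → lipCC (𝓛m g) ≤ α * lipCC g + B₁ * supNC g)
    (z : ℂ) (hz : r ≤ ‖z‖)
    (h u : ℝ → ℂ) (hh : IsLipC h) (hu : IsLipC u)
    (hres : z • h - 𝓛m h = u)
    (hu1 : lipCC u + supNC u ≤ 1) :
    lipCC h + supNC h ≤ (B₁ / (r - α) + 1) * supNC h + 1 / (r - α) :=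
  stmt_15_general 𝓛m α B₁ r hαr hLY z hz h u hh hu hres hu1
end
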